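/- For $2 \le k \le t$ and all $n \ge 1$, $\phi^{*,k}(t,n) \ge \lceil (t-k+1)n/t \rceil$; moreover for $k = 2$, $\phi^{*,2}(t,n) = \lceil (t-1)n/t \rceil$. -/

import Mathlib

/-!
Lower bound: let `A` consist of the first `a = ⌊(k - 1) n / t⌋ + 1` vertices of every class and
let `H` be the legal `k`-sets not contained in `A`. Its partite codegree is `n - a`, but a copy of
`K_t^k` meets `A` in at most `k - 1` vertices while a perfect fractional matching covers every
vertex exactly once, so it would give `t a ≤ (k - 1) n`.

Upper bound for `k = 2`: by convex separation it suffices that for every vertex weighting `y`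
some transversal clique weighs at most `(∑ y) / n`. Every vertex has at most `⌊n / t⌋`
non-neighbours in each other class, which lets a greedy choice find, for each of `n` cyclic
shifts, a clique below the shifted rank profile; together these profiles use every vertex once.
-/

open Finset
open scoped Classical

/-- A set of vertices of the `t`-partite vertex set `Fin t × Fin n` is legal if it
meets each class in at most one vertex. -/
def Legal {t n : ℕ} (S : Finset (Fin t × Fin n)) : Prop :=
  ∀ u ∈ S, ∀ v ∈ S, u.1 = v.1 → u = v

/-- `H` is a `t`-partite `k`-uniform hypergraph with classes of size `n`. -/
def IsPartiteKGraph (t n k : ℕ) (H : Finset (Finset (Fin t × Fin n))) : Prop :=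
  ∀ e ∈ H, e.card = k ∧ Legal e

/-- The minimum partite codegree of `H` is at least `d`. -/
def CodegGE (t n k : ℕ) (H : Finset (Finset (Fin t × Fin n))) (d : ℝ) : Prop :=
  ∀ T : Finset (Fin t × Fin n), T.card = k - 1 → Legal T →
    ∀ j : Fin t, (∀ v ∈ T, v.1 ≠ j) →
      d ≤ ((Finset.univ.filter (fun x : Fin n => insert (j, x) T ∈ H)).card : ℝ)

/-- `S` spans a copy of the complete `k`-graph `K_t^k` in `H` (one vertex per class). -/
def SpansClique (t n k : ℕ) (H : Finset (Finset (Fin t × Fin n)))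
    (S : Finset (Fin t × Fin n)) : Prop :=
  S.card = t ∧ Legal S ∧ ∀ e ⊆ S, e.card = k → e ∈ H

/-- `M` is a perfect `K_t^k`-matching in `H`. -/
def IsPerfectKtMatching (t n k : ℕ) (H M : Finset (Finset (Fin t × Fin n))) : Prop :=
  (∀ S ∈ M, SpansClique t n k H S) ∧
  (M : Set (Finset (Fin t × Fin n))).PairwiseDisjoint id ∧
  ∀ v : Fin t × Fin n, ∃ S ∈ M, v ∈ S

/-- `w` is a perfect fractional `K_t^k`-matching of `H`. -/
def IsPerfectFracMatching (t n k : ℕ) (H : Finset (Finset (Fin t × Fin n)))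
    (w : Finset (Fin t × Fin n) → ℝ) : Prop :=
  (∀ S, 0 ≤ w S ∧ w S ≤ 1) ∧
  (∀ S, w S ≠ 0 → SpansClique t n k H S) ∧
  (∀ v : Fin t × Fin n, ∑ S ∈ Finset.univ.filter (fun S => v ∈ S), w S ≤ 1) ∧
  ∑ S : Finset (Fin t × Fin n), w S = (n : ℝ)

/-- The natural-number version of the partite codegree condition. -/
def CodegGEN (t n k : ℕ) (H : Finset (Finset (Fin t × Fin n))) (d : ℕ) : Prop :=
  ∀ T : Finset (Fin t × Fin n), T.card = k - 1 → Legal T →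
    ∀ j : Fin t, (∀ v ∈ T, v.1 ≠ j) →
      d ≤ (Finset.univ.filter (fun x : Fin n => insert (j, x) T ∈ H)).card

/-- `φ^{*,k}(t,n)`: the smallest integer `d` such that every balanced `t`-partite
`k`-graph with classes of size `n` and minimum partite codegree at least `d` has a
perfect fractional `K_t^k`-matching. -/
noncomputable def phiStar (t k n : ℕ) : ℕ :=
  sInf {d : ℕ | ∀ H : Finset (Finset (Fin t × Fin n)), IsPartiteKGraph t n k H →
    CodegGEN t n k H d → ∃ w, IsPerfectFracMatching t n k H w}

theorem Int.ceil_sub_mul_div_eq {t : ℕ} (ht : 0 < t) (n s : ℕ) :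
    ⌈((t : ℚ) - s) * n / t⌉ = (n : ℤ) - (s * n / t : ℕ) := by
  have h : ((t : ℚ) - s) * n / t = -(((s * n : ℕ) : ℚ) / t) + n := by
    push_cast; field_simp; ring
  rw [h, Int.ceil_add_natCast, Int.ceil_neg, Rat.floor_natCast_div_natCast]
  push_cast
  ring

section Partite

variable {t n k : ℕ}

lemma Legal.mono {S T : Finset (Fin t × Fin n)} (hS : Legal S) (hTS : T ⊆ S) : Legal T :=
  fun u hu v hv => hS u (hTS hu) v (hTS hv)

lemma Legal.insert {T : Finset (Fin t × Fin n)} (hT : Legal T) {j : Fin t}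
    (hj : ∀ v ∈ T, v.1 ≠ j) (c : Fin n) : Legal (insert (j, c) T) := by
  intro u hu v hv huv
  rcases mem_insert.1 hu with rfl | hu <;> rcases mem_insert.1 hv with rfl | hv
  · rfl
  · exact absurd huv.symm (hj v hv)
  · exact absurd huv (hj u hu)
  · exact hT u hu v hv huv

lemma CodegGEN.mono {H : Finset (Finset (Fin t × Fin n))} {d d' : ℕ} (hdd' : d ≤ d')
    (hH : CodegGEN t n k H d') : CodegGEN t n k H d :=
  fun T hT hTl j hj => hdd'.trans (hH T hT hTl j hj)

lemma sum_sum_filter_mem_eq_sum_mul_card_inter {α : Type*} [Fintype α] [DecidableEq α]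
    (w : Finset α → ℝ) (A : Finset α) :
    ∑ v ∈ A, ∑ S ∈ univ.filter (fun S => v ∈ S), w S = ∑ S, w S * #(S ∩ A) := by
  simp only [sum_filter]
  rw [sum_comm]
  refine sum_congr rfl fun S _ => ?_
  rw [sum_ite_mem, sum_const, inter_comm, nsmul_eq_mul, mul_comm]

namespace IsPerfectFracMatching

variable {H : Finset (Finset (Fin t × Fin n))} {w : Finset (Fin t × Fin n) → ℝ}

lemma sum_filter_mem_eq_one (hw : IsPerfectFracMatching t n k H w) (v : Fin t × Fin n) :
    ∑ S ∈ univ.filter (fun S => v ∈ S), w S = 1 := by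
  obtain ⟨-, hspan, hle, hsum⟩ := hw
  have htotal : ∑ v : Fin t × Fin n, ∑ S ∈ univ.filter (fun S => v ∈ S), w S =
      ∑ _v : Fin t × Fin n, (1 : ℝ) := calc
    _ = ∑ S, w S * #(S ∩ univ) := sum_sum_filter_mem_eq_sum_mul_card_inter w univ
    _ = ∑ S, w S * t := sum_congr rfl fun S _ => by
      by_cases h : w S = 0
      · simp [h]
      · rw [inter_univ, (hspan S h).1]
    _ = _ := by simp [← sum_mul, hsum, mul_comm]
  exact (sum_eq_sum_iff_of_le fun v _ => hle v).1 htotal v (mem_univ v)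

lemma card_le (hw : IsPerfectFracMatching t n k H w) (A : Finset (Fin t × Fin n)) (r : ℕ)
    (hA : ∀ S, SpansClique t n k H S → #(S ∩ A) ≤ r) : (#A : ℝ) ≤ r * n := by
  calc (#A : ℝ) = ∑ v ∈ A, ∑ S ∈ univ.filter (fun S => v ∈ S), w S := by
        simp [hw.sum_filter_mem_eq_one]
    _ = ∑ S, w S * #(S ∩ A) := sum_sum_filter_mem_eq_sum_mul_card_inter w A
    _ ≤ ∑ S, w S * r := sum_le_sum fun S _ => by
        by_cases h : w S = 0
        · simp [h]
        · exact mul_le_mul_of_nonneg_left (by exact_mod_cast hA S (hw.2.1 S h)) (hw.1 S).1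
    _ = r * n := by rw [← sum_mul, hw.2.2.2, mul_comm]

end IsPerfectFracMatching

end Partite

section Barrier

variable {t n k : ℕ}

noncomputable def barrierGraph (t n k : ℕ) (A : Finset (Fin t × Fin n)) :
    Finset (Finset (Fin t × Fin n)) :=
  univ.filter fun e => #e = k ∧ Legal e ∧ ¬ e ⊆ A

lemma isPartiteKGraph_barrierGraph (A : Finset (Fin t × Fin n)) :
    IsPartiteKGraph t n k (barrierGraph t n k A) :=
  fun _ he => by
    obtain ⟨-, hcard, hlegal, -⟩ := mem_filter.1 he
    exact ⟨hcard, hlegal⟩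

lemma codegGEN_barrierGraph (hk : 1 ≤ k) {A : Finset (Fin t × Fin n)} {a : ℕ}
    (hA : ∀ j, #(univ.filter fun c => (j, c) ∈ A) ≤ a) :
    CodegGEN t n k (barrierGraph t n k A) (n - a) := by
  intro T hT hTl j hj
  have hjT : ∀ c, (j, c) ∉ T := fun c h => hj _ h rfl
  calc n - a ≤ #(univ.filter fun c => (j, c) ∉ A) := by
        rw [filter_not, card_sdiff_of_subset (filter_subset _ _), card_univ, Fintype.card_fin]
        exact Nat.sub_le_sub_left (hA j) n
    _ ≤ _ := card_le_card fun c hc => by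
        refine mem_filter.2 ⟨mem_univ c, mem_filter.2 ⟨mem_univ _, ?_, hTl.insert hj c, ?_⟩⟩
        · rw [card_insert_of_notMem (hjT c), hT, Nat.sub_add_cancel hk]
        · exact fun h => (mem_filter.1 hc).2 (h (mem_insert_self _ _))

lemma card_inter_le_of_spansClique_barrierGraph {A S : Finset (Fin t × Fin n)}
    (hS : SpansClique t n k (barrierGraph t n k A) S) : #(S ∩ A) ≤ k - 1 := by
  by_contra! h
  obtain ⟨e, heSA, he⟩ := exists_subset_card_eq (show k ≤ #(S ∩ A) by omega)
  have heH := hS.2.2 e (heSA.trans inter_subset_left) he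
  exact (mem_filter.1 heH).2.2.2 (heSA.trans inter_subset_right)

lemma not_isPerfectFracMatching_barrierGraph {A : Finset (Fin t × Fin n)}
    (hA : (k - 1) * n < #A) (w : Finset (Fin t × Fin n) → ℝ) :
    ¬ IsPerfectFracMatching t n k (barrierGraph t n k A) w := fun hw => by
  have := hw.card_le A (k - 1) fun S hS => card_inter_le_of_spansClique_barrierGraph hS
  exact this.not_gt (by exact_mod_cast hA)

end Barrier

section Transversal

variable {t n k : ℕ}

def transversal (x : Fin t → Fin n) : Finset (Fin t × Fin n) :=
  univ.image fun j => (j, x j)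

@[simp]
lemma mem_transversal {x : Fin t → Fin n} {v : Fin t × Fin n} :
    v ∈ transversal x ↔ x v.1 = v.2 := by
  simp [transversal, Prod.ext_iff, eq_comm]

lemma card_transversal (x : Fin t → Fin n) : #(transversal x) = t := by
  rw [transversal, card_image_of_injective _ fun _ _ h => congrArg Prod.fst h, card_univ,
    Fintype.card_fin]

lemma sum_transversal {M : Type*} [AddCommMonoid M] (x : Fin t → Fin n)
    (g : Fin t × Fin n → M) :
    ∑ v ∈ transversal x, g v = ∑ j, g (j, x j) :=
  sum_image fun _ _ _ _ h => congrArg Prod.fst h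

lemma legal_transversal (x : Fin t → Fin n) : Legal (transversal x) := by
  intro u hu v hv huv
  rw [mem_transversal] at hu hv
  exact Prod.ext huv (by rw [← hu, ← hv, huv])

lemma exists_isPerfectFracMatching_of_cover {H : Finset (Finset (Fin t × Fin n))} (ht : 0 < t)
    {ι : Type*} [Fintype ι] (x : ι → Fin t → Fin n) (μ : ι → ℝ) (hμ : ∀ i, 0 ≤ μ i)
    (hspan : ∀ i, SpansClique t n k H (transversal (x i)))
    (hcover : ∀ j c, ∑ i ∈ univ.filter (fun i => x i j = c), μ i = 1) :
    ∃ w, IsPerfectFracMatching t n k H w := by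
  let w S := ∑ i ∈ univ.filter (fun i => transversal (x i) = S), μ i
  have hcoverage : ∀ v : Fin t × Fin n, ∑ S ∈ univ.filter (fun S => v ∈ S), w S = 1 := by
    intro v
    rw [← hcover v.1 v.2, ← sum_fiberwise_of_maps_to (g := fun i => transversal (x i))
      (t := univ.filter fun S => v ∈ S) (by simp)]
    refine sum_congr rfl fun S hS => ?_
    rw [filter_filter]
    exact sum_congr (filter_congr fun i _ => by aesop) fun _ _ => rfl
  refine ⟨w, fun S => ⟨sum_nonneg fun i _ => hμ i, ?_⟩, fun S hS => ?_, fun v => ?_, ?_⟩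
  · by_cases hS : ∃ i, transversal (x i) = S
    · obtain ⟨i, rfl⟩ := hS
      rw [← hcoverage (⟨0, ht⟩, x i ⟨0, ht⟩)]
      exact single_le_sum (f := w) (fun _ _ => sum_nonneg fun i _ => hμ i) (by simp)
    · simp [w, filter_false_of_mem fun i _ => not_exists.1 hS i]
  · obtain ⟨i, hi, -⟩ := exists_ne_zero_of_sum_ne_zero hS
    rw [← (mem_filter.1 hi).2]
    exact hspan i
  · exact (hcoverage v).le
  · rw [sum_fiberwise, ← sum_fiberwise _ (fun i => x i ⟨0, ht⟩)]
    simp [hcover]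

end Transversal

section Threshold

variable {t k n : ℕ}

def ForcesPerfectFracMatching (t k n d : ℕ) : Prop :=
  ∀ H : Finset (Finset (Fin t × Fin n)), IsPartiteKGraph t n k H →
    CodegGEN t n k H d → ∃ w, IsPerfectFracMatching t n k H w

lemma phiStar_eq_sInf : phiStar t k n = sInf {d | ForcesPerfectFracMatching t k n d} := rfl

lemma ForcesPerfectFracMatching.mono {d d' : ℕ} (hdd' : d ≤ d')
    (hd : ForcesPerfectFracMatching t k n d) : ForcesPerfectFracMatching t k n d' :=
  fun H hH hcod => hd H hH (hcod.mono hdd')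

lemma mem_of_codegGEN_self (hk : 1 ≤ k) {H : Finset (Finset (Fin t × Fin n))}
    (hH : CodegGEN t n k H n) {e : Finset (Fin t × Fin n)} (he : Legal e) (hcard : #e = k) :
    e ∈ H := by
  obtain ⟨v, hv⟩ := card_pos.1 (hcard ▸ hk : 0 < #e)
  have hfull := hH (e.erase v) (by rw [card_erase_of_mem hv, hcard]) (he.mono (erase_subset _ _))
    v.1 fun u hu huv => ne_of_mem_erase hu (he u (mem_of_mem_erase hu) v hv huv)
  have hall := filter_eq_self.1
    (eq_univ_of_card _ ((card_le_univ _).antisymm (by rwa [Fintype.card_fin]))) v.2 (mem_univ _)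
  simpa [insert_erase hv] using hall

/-- The rows `{(j, c) | j}` form a perfect matching. -/
lemma forcesPerfectFracMatching_self (hk : 1 ≤ k) (ht : 0 < t) :
    ForcesPerfectFracMatching t k n n := by
  intro H _ hH
  refine exists_isPerfectFracMatching_of_cover ht (fun c _ => c) (fun _ => 1) (fun _ => zero_le_one)
    (fun c => ⟨card_transversal _, legal_transversal _, fun e he hcard => ?_⟩)
    fun j c => by simp [filter_eq']
  exact mem_of_codegGEN_self hk hH ((legal_transversal _).mono he) hcard

lemma not_forcesPerfectFracMatching (hk : 1 ≤ k) {a : ℕ} (han : a ≤ n)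
    (h : (k - 1) * n < t * a) :
    ¬ ForcesPerfectFracMatching t k n (n - a) := by
  intro hforce
  obtain ⟨B, -, hB⟩ := exists_subset_card_eq (show a ≤ #(univ : Finset (Fin n)) by simpa)
  obtain ⟨w, hw⟩ := hforce _ (isPartiteKGraph_barrierGraph (univ ×ˢ B))
    (codegGEN_barrierGraph hk fun j => by simp [hB])
  exact not_isPerfectFracMatching_barrierGraph (by simpa [hB]) w hw

lemma sub_mul_div_le_phiStar (hk : 1 ≤ k) (ht : 0 < t) :
    n - (k - 1) * n / t ≤ phiStar t k n := by
  rw [phiStar_eq_sInf]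
  refine le_csInf ⟨n, forcesPerfectFracMatching_self hk ht⟩ fun d hd => ?_
  by_contra! hlt
  refine not_forcesPerfectFracMatching hk (a := (k - 1) * n / t + 1) (by omega)
    (Nat.lt_mul_div_succ _ ht) (hd.mono (by omega))

end Threshold

section Graph

variable {t n m : ℕ} {H : Finset (Finset (Fin t × Fin n))}

def IsCliqueTransversal (H : Finset (Finset (Fin t × Fin n))) (x : Fin t → Fin n) : Prop :=
  ∀ j j', j ≠ j' → ({(j, x j), (j', x j')} : Finset (Fin t × Fin n)) ∈ H

lemma IsCliqueTransversal.spansClique {x : Fin t → Fin n} (hx : IsCliqueTransversal H x) :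
    SpansClique t n 2 H (transversal x) := by
  refine ⟨card_transversal x, legal_transversal x, fun e he hcard => ?_⟩
  obtain ⟨u, v, huv, rfl⟩ := card_eq_two.1 hcard
  have hu := mem_transversal.1 (he (mem_insert_self u {v}))
  have hv := mem_transversal.1 (he (mem_insert_of_mem (mem_singleton_self v)))
  rw [← Prod.mk.eta (p := u), ← Prod.mk.eta (p := v), ← hu, ← hv]
  exact hx u.1 v.1 fun h => huv (Prod.ext h (by rw [← hu, ← hv, h]))

lemma card_filter_pair_notMem_le (hD : CodegGEN t n 2 H (n - m)) (u : Fin t × Fin n) {j : Fin t}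
    (hj : u.1 ≠ j) : #(univ.filter fun c => ({(j, c), u} : Finset _) ∉ H) ≤ m := by
  have h := hD {u} (card_singleton u) (fun _ ha _ hb _ => (mem_singleton.1 ha).trans
    (mem_singleton.1 hb).symm) j (by simpa using hj)
  rw [filter_not, card_sdiff_of_subset (filter_subset _ _), card_univ, Fintype.card_fin]
  omega

/-- Greedy choice in increasing order of `#(U j)`: when the `s`-th class is reached, the `s`
classes already fixed exclude at most `s * m` vertices, and the hypothesis on `U` leaves more. -/
lemma exists_isCliqueTransversal_forall_mem (hD : CodegGEN t n 2 H (n - m))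
    (U : Fin t → Finset (Fin n)) (hU : ∀ J, #(univ.filter fun j => #(U j) ≤ J * m) ≤ J) :
    ∃ x, IsCliqueTransversal H x ∧ ∀ j, x j ∈ U j := by
  suffices h : ∀ s : Finset (Fin t), ∃ x : Fin t → Fin n, (∀ j, x j ∈ U j) ∧
      ∀ j ∈ s, ∀ j' ∈ s, j ≠ j' → ({(j, x j), (j', x j')} : Finset _) ∈ H by
    obtain ⟨x, hxU, hx⟩ := h univ
    exact ⟨x, fun j j' => hx j (mem_univ j) j' (mem_univ j'), hxU⟩
  intro s
  induction s using Finset.induction_on_max_value (fun j => #(U j)) with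
  | empty =>
    have hne : ∀ j, (U j).Nonempty := fun j => card_pos.1 <| Nat.pos_of_ne_zero fun h0 =>
      (card_pos.2 ⟨j, mem_filter.2 ⟨mem_univ j, by simp [h0]⟩⟩).ne' (Nat.le_zero.1 (hU 0))
    exact ⟨fun j => (hne j).choose, fun j => (hne j).choose_spec, by simp⟩
  | insert a s has hmax ih =>
    obtain ⟨x, hxU, hx⟩ := ih
    let bad := s.biUnion fun j => univ.filter fun c => ({(a, c), (j, x j)} : Finset _) ∉ H
    have hbad : #bad ≤ #s * m := card_biUnion_le.trans <| (sum_le_sum fun j hj =>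
      card_filter_pair_notMem_le hD (j, x j) fun h : j = a => has (h ▸ hj)).trans (by simp)
    have hUa : #s * m < #(U a) := by
      by_contra! hle
      have := card_le_card (show insert a s ⊆ univ.filter fun j => #(U j) ≤ #s * m from
        fun j hj => mem_filter.2 ⟨mem_univ j, (mem_insert.1 hj).elim (· ▸ hle)
          fun hj => (hmax j hj).trans hle⟩)
      rw [card_insert_of_notMem has] at this
      exact absurd (hU #s) (by omega)
    obtain ⟨c, hc⟩ : (U a \ bad).Nonempty := by
      rw [← card_pos]
      have := le_card_sdiff bad (U a)
      omega
    obtain ⟨hcU, hcbad⟩ := mem_sdiff.1 hc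
    have hgood : ∀ j ∈ s, ({(a, c), (j, x j)} : Finset _) ∈ H := fun j hj => by
      by_contra h
      exact hcbad (mem_biUnion.2 ⟨j, hj, mem_filter.2 ⟨mem_univ c, h⟩⟩)
    refine ⟨Function.update x a c, fun j => ?_, fun j hj j' hj' hjj' => ?_⟩
    · rcases eq_or_ne j a with rfl | hja
      · simpa using hcU
      · simpa [hja] using hxU j
    have hs : ∀ {i}, i ∈ insert a s → i ≠ a → i ∈ s := fun hi hia =>
      (mem_insert.1 hi).resolve_left hia
    rcases eq_or_ne j a with rfl | hja
    · simpa [hjj'.symm] using hgood j' (hs hj' hjj'.symm)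
    rcases eq_or_ne j' a with rfl | hj'a
    · simpa [hja, pair_comm] using hgood j (hs hj hja)
    · simpa [hja, hj'a] using hx j (hs hj hja) j' (hs hj' hj'a) hjj'

end Graph

lemma Nat.add_le_mod_or_mod_add_le {n m a d : ℕ} (ha : a < n) (hmd : m ≤ d)
    (hdn : d + m ≤ n) :
    a + m ≤ (a + d) % n ∨ (a + d) % n + m ≤ a := by
  rcases lt_or_ge (a + d) n with h | h
  · rw [Nat.mod_eq_of_lt h]
    omega
  · rw [Nat.mod_eq_sub_mod h, Nat.mod_eq_of_lt (by omega)]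
    omega

/-- The residues `(i + j m) % n`, `j < t`, are pairwise at distance at least `m` when
`t m ≤ n`, so at most `J` of them lie below `J m`. -/
lemma Nat.card_filter_add_mul_mod_lt_le {t n m : ℕ} (hn : 0 < n) (htm : t * m ≤ n) (i J : ℕ) :
    #(univ.filter fun j : Fin t => (i + j * m) % n < J * m) ≤ J := by
  rcases Nat.eq_zero_or_pos m with rfl | hm
  · simp
  have hdiv : ∀ {a b : ℕ}, a + m ≤ b → a / m < b / m := fun h =>
    (Nat.add_div_right _ hm ▸ Nat.div_le_div_right h : _ / m + 1 ≤ _)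
  have hsep : ∀ j j' : Fin t, j < j' → (i + j * m) % n / m ≠ (i + j' * m) % n / m := by
    intro j j' hjj'
    have hd : (j : ℕ) * m + (j' - j) * m = j' * m := by
      rw [← Nat.add_mul, Nat.add_sub_cancel' hjj'.le]
    have hmod : (i + j' * m) % n = ((i + j * m) % n + (j' - j) * m) % n := by
      rw [Nat.mod_add_mod, ← hd, Nat.add_assoc]
    have hdn : (j' - j) * m + m ≤ n :=
      (Nat.succ_mul _ m ▸ Nat.mul_le_mul_right m (by omega) : _ ≤ t * m).trans htm
    rw [hmod]
    rcases Nat.add_le_mod_or_mod_add_le (Nat.mod_lt _ hn)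
      (Nat.le_mul_of_pos_left m (by omega)) hdn with h | h
    · exact (hdiv h).ne
    · exact (hdiv h).ne'
  refine (card_le_card_of_injOn (fun j : Fin t => (i + j * m) % n / m) (t := range J)
    (fun j hj => mem_range.2 ((Nat.div_lt_iff_lt_mul hm).2 (mem_filter.1 hj).2))
    fun j _ j' _ h => ?_).trans (card_range J).le
  rcases lt_trichotomy j j' with hjj' | rfl | hjj'
  · exact absurd h (hsep j j' hjj')
  · rfl
  · exact absurd h.symm (hsep j' j hjj')

/-- Sort every class by `y`. For each shift `i < n`, the greedy lemma gives a clique whose vertex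
in class `j` has rank at most `(i + j * (n / t)) % n`; over all shifts these bounds run through
every rank of every class once, so one of the `n` cliques has at most average weight. -/
lemma exists_isCliqueTransversal_card_mul_sum_le {t n : ℕ} [NeZero n]
    {H : Finset (Finset (Fin t × Fin n))} (hD : CodegGEN t n 2 H (n - n / t))
    (y : Fin t × Fin n → ℝ) :
    ∃ x, IsCliqueTransversal H x ∧ n * ∑ j, y (j, x j) ≤ ∑ v, y v := by
  let σ j := Tuple.sort fun c => y (j, c)
  have hσ : ∀ j, Monotone fun r => y (j, σ j r) := fun j =>
    Tuple.monotone_sort fun c => y (j, c)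
  let ρ (i : Fin n) (j : Fin t) : Fin n := i + Fin.ofNat n (j * (n / t))
  have hρ : ∀ i j, ((ρ i j : Fin n) : ℕ) = (i + j * (n / t)) % n := by
    simp [ρ, Fin.val_add]
  have hclique : ∀ i, ∃ x, IsCliqueTransversal H x ∧
      ∀ j, y (j, x j) ≤ y (j, σ j (ρ i j)) := by
    intro i
    obtain ⟨x, hx, hxU⟩ := exists_isCliqueTransversal_forall_mem hD
      (fun j => (Iic (ρ i j)).image (σ j)) fun J => by
        simpa [card_image_of_injective _ (σ _).injective, hρ, Nat.add_one_le_iff] using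
          Nat.card_filter_add_mul_mod_lt_le (NeZero.pos n) (Nat.mul_div_le n t) i J
    refine ⟨x, hx, fun j => ?_⟩
    obtain ⟨r, hr, hrx⟩ := mem_image.1 (hxU j)
    rw [← hrx]
    exact hσ j (mem_Iic.1 hr)
  choose x hx hxy using hclique
  have hrows : ∑ v, y v = ∑ i, ∑ j, y (j, σ j (ρ i j)) := by
    rw [Fintype.sum_prod_type]
    conv_rhs => rw [sum_comm]
    refine sum_congr rfl fun j _ => ?_
    rw [← Equiv.sum_comp (σ j), ← Equiv.sum_comp (Equiv.addRight (Fin.ofNat n (j * (n / t))))]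
    rfl
  obtain ⟨i, -, hi⟩ := exists_le_of_sum_le univ_nonempty
    (show ∑ i, n * ∑ j, y (j, x i j) ≤ ∑ _i : Fin n, ∑ v, y v by
      rw [← mul_sum, sum_const, card_univ, Fintype.card_fin, nsmul_eq_mul, hrows]
      gcongr with i _ j _
      exact hxy i j)
  exact ⟨x i, hx i, hi⟩

/-- If the constant vector `1 / n` were not a convex combination of indicator vectors of clique
transversals, a separating functional `f` would make every clique heavier than average for the
vertex weights `f (𝟙_v)`, contradicting the averaging lemma. -/
lemma exists_isPerfectFracMatching_of_codegGEN_two {t n : ℕ} [NeZero n] (ht : 0 < t)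
    {H : Finset (Finset (Fin t × Fin n))} (hD : CodegGEN t n 2 H (n - n / t)) :
    ∃ w, IsPerfectFracMatching t n 2 H w := by
  let χ (x : Fin t → Fin n) (v : Fin t × Fin n) : ℝ := if v ∈ transversal x then 1 else 0
  let P := χ '' {x | IsCliqueTransversal H x}
  by_cases hmem : (fun _ => (n : ℝ)⁻¹) ∈ convexHull ℝ P
  · obtain ⟨ι, _, μ, z, hμ, -, hz, hsum⟩ := mem_convexHull_iff_exists_fintype.1 hmem
    choose x hx hxz using hz
    refine exists_isPerfectFracMatching_of_cover ht x (fun i => n * μ i)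
      (fun i => mul_nonneg n.cast_nonneg (hμ i)) (fun i => (hx i).spansClique) fun j c => ?_
    have hjc := congrFun hsum (j, c)
    simp only [Finset.sum_apply, Pi.smul_apply, ← hxz, χ, mem_transversal, smul_eq_mul, mul_ite,
      mul_one, mul_zero, ← sum_filter] at hjc
    rw [← mul_sum, hjc, mul_inv_cancel₀ (Nat.cast_ne_zero.2 (NeZero.ne n))]
  · exfalso
    obtain ⟨f, u, hfu, huf⟩ := geometric_hahn_banach_point_closed (convex_convexHull ℝ P)
      ((Set.toFinite P).isClosed_convexHull ℝ) hmem
    let g (v : Fin t × Fin n) := f fun v' => if v = v' then 1 else 0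
    have hf : ∀ p, f p = ∑ v, p v * g v := fun p => f.toLinearMap.pi_apply_eq_sum_univ p
    obtain ⟨x, hx, hle⟩ := exists_isCliqueTransversal_card_mul_sum_le hD g
    have hclique := huf (χ x) (subset_convexHull ℝ P ⟨x, hx, rfl⟩)
    rw [hf] at hfu hclique
    simp only [χ, ite_mul, one_mul, zero_mul, sum_ite_mem, univ_inter, sum_transversal] at hclique
    rw [← mul_sum] at hfu
    have hn : (0 : ℝ) < n := Nat.cast_pos.2 (NeZero.pos n)
    have := (inv_mul_lt_iff₀ hn).1 hfu
    linarith [mul_lt_mul_of_pos_left hclique hn]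

/-- Theorem 1.5 (lower bound, and exact value for `k = 2`):
`φ^{*,k}(t,n) ≥ ⌈(t-k+1)n/t⌉`, with equality `φ^{*,2}(t,n) = ⌈(t-1)n/t⌉` for `k = 2`. -/
theorem stmt18 (t k n : ℕ) (hk : 2 ≤ k) (hkt : k ≤ t) (hn : 1 ≤ n) :
    ⌈(((t : ℚ) - k + 1) * n) / t⌉ ≤ (phiStar t k n : ℤ) ∧
    (k = 2 → (phiStar t k n : ℤ) = ⌈(((t : ℚ) - 1) * n) / t⌉) := by
  have ht : 0 < t := by omega
  have hlb := sub_mul_div_le_phiStar (n := n) (by omega : 1 ≤ k) ht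
  refine ⟨?_, fun hk2 => ?_⟩
  · rw [show (t : ℚ) - k + 1 = t - (k - 1 : ℕ) by push_cast [(by omega : 1 ≤ k)]; ring,
      Int.ceil_sub_mul_div_eq ht]
    generalize (k - 1) * n / t = q at hlb ⊢
    omega
  · subst hk2
    have : NeZero n := ⟨by omega⟩
    have hub : phiStar t 2 n ≤ n - n / t :=
      Nat.sInf_le fun _ _ hD => exists_isPerfectFracMatching_of_codegGEN_two ht hD
    rw [show (t : ℚ) - 1 = t - (1 : ℕ) by simp, Int.ceil_sub_mul_div_eq ht, one_mul]
    rw [show (2 - 1) * n = n by simp] at hlb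
    have hq := Nat.div_le_self n t
    generalize n / t = q at hlb hub hq ⊢
    omega
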